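/- arXiv:2501.18980 — 2 statements merged into one kernel-verified Lean document; each statement's English description precedes it below -/
import Mathlib

section
/- Let W be a real b×c matrix and set X := Wᵀ (a c×b matrix) and Y := Wᵀ (a c×b matrix). Define g(W̃) := ‖X(W̃ − W)‖_F + ‖(W̃ − W)Y‖_F for W̃ a real b×c matrix, where ‖·‖_F is the (non-squared) Frobenius norm. Fix indices j ∈ {1,…,b} and k ∈ {1,…,c}, and let W̃ be the matrix with W̃_{jk} = 0 and W̃_{j'k'} = W_{j'k'} for all (j',k') ≠ (j,k). Then g(W̃) = |W_{jk}| · (‖W_{j:}‖₂ + ‖W_{:k}‖₂), where W_{j:} is the j-th row of W and W_{:k} is the k-th column of W. -/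
open BigOperators Finset Matrix

/-- Frobenius norm (non-squared) of a real matrix. -/
noncomputable def frob {m n : Type*} [Fintype m] [Fintype n] (M : Matrix m n ℝ) : ℝ :=
  Real.sqrt (∑ i, ∑ j, (M i j) ^ 2)

/-- Euclidean (ℓ2) norm of a real vector. -/
noncomputable def l2 {n : Type*} [Fintype n] (v : n → ℝ) : ℝ :=
  Real.sqrt (∑ i, (v i) ^ 2)

theorem stmt_3 (b c : ℕ)
    (W : Matrix (Fin b) (Fin c) ℝ)
    (j : Fin b) (k : Fin c)
    (Wt : Matrix (Fin b) (Fin c) ℝ)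
    (hWt : ∀ j' k', Wt j' k' = if j' = j ∧ k' = k then 0 else W j' k') :
    frob (Wᵀ * (Wt - W)) + frob ((Wt - W) * Wᵀ)
      = |W j k| * (l2 (fun l => W j l) + l2 (fun i => W i k)) := by
  have hD : ∀ i k', (Wt - W) i k' = if i = j ∧ k' = k then -W j k else 0 := by
    intro i k'
    rw [Matrix.sub_apply, hWt]
    by_cases h : i = j ∧ k' = k
    · obtain ⟨h1, h2⟩ := h; simp [h1, h2]
    · simp [h]
  have hA : ∀ l k', (Wᵀ * (Wt - W)) l k' = if k' = k then W j l * (-W j k) else 0 := by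
    intro l k'
    rw [Matrix.mul_apply]
    calc ∑ i, Wᵀ l i * (Wt - W) i k'
        = ∑ i, (if i = j then (if k' = k then W j l * (-W j k) else 0) else 0) := by
          refine Finset.sum_congr rfl fun i _ => ?_
          rw [hD]
          by_cases h1 : i = j <;> by_cases h2 : k' = k <;>
            simp [h1, h2, Matrix.transpose_apply]
      _ = if k' = k then W j l * (-W j k) else 0 := by
          rw [Finset.sum_ite_eq' Finset.univ j]; simp
  have hB : ∀ j' i, ((Wt - W) * Wᵀ) j' i = if j' = j then (-W j k) * W i k else 0 := by
    intro j' i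
    rw [Matrix.mul_apply]
    calc ∑ k', (Wt - W) j' k' * Wᵀ k' i
        = ∑ k', (if k' = k then (if j' = j then (-W j k) * W i k else 0) else 0) := by
          refine Finset.sum_congr rfl fun k' _ => ?_
          rw [hD]
          by_cases h1 : j' = j <;> by_cases h2 : k' = k <;>
            simp [h1, h2, Matrix.transpose_apply]
      _ = if j' = j then (-W j k) * W i k else 0 := by
          rw [Finset.sum_ite_eq' Finset.univ k]; simp
  have e1 : frob (Wᵀ * (Wt - W)) = |W j k| * l2 (fun l => W j l) := by
    unfold frob l2
    have h1 : ∀ l, ∑ k', ((Wᵀ * (Wt - W)) l k') ^ 2 = (W j k) ^ 2 * (W j l) ^ 2 := by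
      intro l
      rw [Finset.sum_eq_single k]
      · rw [hA]; simp; ring
      · intro k' _ hk'; rw [hA]; simp [hk']
      · simp
    rw [Finset.sum_congr rfl (fun l _ => h1 l), ← Finset.mul_sum,
      Real.sqrt_mul (sq_nonneg _), Real.sqrt_sq_eq_abs]
  have e2 : frob ((Wt - W) * Wᵀ) = |W j k| * l2 (fun i => W i k) := by
    unfold frob l2
    have h1 : ∀ j', ∑ i, (((Wt - W) * Wᵀ) j' i) ^ 2
        = if j' = j then ∑ i, (W j k) ^ 2 * (W i k) ^ 2 else 0 := by
      intro j'
      by_cases h : j' = j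
      · simp only [h, if_true]
        refine Finset.sum_congr rfl fun i _ => ?_
        rw [hB]; simp [h]; ring
      · simp only [h, if_false]
        refine Finset.sum_eq_zero fun i _ => ?_
        rw [hB]; simp [h]
    rw [Finset.sum_congr rfl (fun j' _ => h1 j'), Finset.sum_ite_eq' Finset.univ j]
    simp only [Finset.mem_univ, if_true]
    rw [← Finset.mul_sum, Real.sqrt_mul (sq_nonneg _), Real.sqrt_sq_eq_abs]
  rw [e1, e2]; ring
end

section
/- Let W be a real b×c matrix and set X := Wᵀ (so a = c) and Y := Wᵀ (so d = b). Define g'(W̃) := ‖X(W̃ − W)‖_F² + ‖(W̃ − W)Y‖_F². Fix indices j ∈ {1,…,b} and k ∈ {1,…,c}, and let W̃ be the matrix with W̃_{jk} = 0 and W̃_{j'k'} = W_{j'k'} for all (j',k') ≠ (j,k). Then the associated score S_{jk} := √(g'(W̃)) satisfies S_{jk} = |W_{jk}| · √(‖W_{j:}‖₂² + ‖W_{:k}‖₂²). -/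
open BigOperators Finset Matrix

/-- Squared Frobenius norm of a real matrix. -/
noncomputable def frobSq {m n : Type*} [Fintype m] [Fintype n] (M : Matrix m n ℝ) : ℝ :=
  ∑ i, ∑ j, (M i j) ^ 2

theorem stmt_14 (b c : ℕ)
    (W : Matrix (Fin b) (Fin c) ℝ)
    (j : Fin b) (k : Fin c)
    (Wt : Matrix (Fin b) (Fin c) ℝ)
    (hWt : ∀ j' k', Wt j' k' = if j' = j ∧ k' = k then 0 else W j' k') :
    Real.sqrt (frobSq (Wᵀ * (Wt - W)) + frobSq ((Wt - W) * Wᵀ))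
      = |W j k| * Real.sqrt ((∑ l, (W j l) ^ 2) + ∑ i, (W i k) ^ 2) := by
  have hD : ∀ j' k', (Wt - W) j' k' = if j' = j ∧ k' = k then -W j k else 0 := by
    intro j' k'
    simp only [Matrix.sub_apply, hWt]
    by_cases h : j' = j ∧ k' = k
    · obtain ⟨h1, h2⟩ := h; subst h1; subst h2; simp
    · simp [h]
  have hA : ∀ i l, (Wᵀ * (Wt - W)) i l = if l = k then -(W j k * W j i) else 0 := by
    intro i l
    rw [Matrix.mul_apply]
    rw [Finset.sum_eq_single j]
    · by_cases h : l = k <;> simp [hD, h, mul_comm]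
    · intro x _ hx; simp [hD, hx]
    · simp
  have hB : ∀ i l, ((Wt - W) * Wᵀ) i l = if i = j then -(W j k * W l k) else 0 := by
    intro i l
    rw [Matrix.mul_apply]
    rw [Finset.sum_eq_single k]
    · simp only [hD, Matrix.transpose_apply]
      by_cases h : i = j <;> simp [h]
    · intro x _ hx; simp [hD, hx]
    · simp
  have h1 : frobSq (Wᵀ * (Wt - W)) = (W j k)^2 * ∑ l, (W j l)^2 := by
    unfold frobSq
    simp only [hA, apply_ite (· ^ (2:ℕ))]
    simp [Finset.sum_ite_eq', Finset.mul_sum, mul_pow]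
  have h2 : frobSq ((Wt - W) * Wᵀ) = (W j k)^2 * ∑ i, (W i k)^2 := by
    unfold frobSq
    simp only [hB, apply_ite (· ^ (2:ℕ))]
    rw [Finset.sum_eq_single j]
    · simp [Finset.mul_sum, mul_pow]
    · intro x _ hx; simp [hx]
    · simp
  rw [h1, h2, ← mul_add, Real.sqrt_mul (sq_nonneg _), Real.sqrt_sq_eq_abs]
end
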